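/- arXiv:1407.0367 — 3 statements merged into one kernel-verified Lean document; each statement's English description precedes it below -/
import Mathlib

section
/- If G is a graph and x, y, z is a path of length 2 in G (edges xy and yz present, x ≠ z), then the Roman bondage number satisfies b_R(G) ≤ d(x) + d(y) + d(z) − 3 − |N(x) ∩ N(y)|. -/
/-- A Roman dominating function on `G`: labels in `{0,1,2}` and every vertex
labeled `0` has a neighbor labeled `2`. -/
def IsRDF {V : Type*} (G : SimpleGraph V) (f : V → ℕ) : Prop :=
  (∀ v, f v ≤ 2) ∧ ∀ v, f v = 0 → ∃ u, G.Adj v u ∧ f u = 2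

/-- The Roman domination number of `G`. -/
noncomputable def romanDom {V : Type*} [Fintype V] (G : SimpleGraph V) : ℕ :=
  sInf {w | ∃ f, IsRDF G f ∧ ∑ v, f v = w}

/-- The Roman domination number of the vertex-deleted graph `G - v`. -/
noncomputable def romanDomDel {V : Type*} [Fintype V] [DecidableEq V]
    (G : SimpleGraph V) (v : V) : ℕ :=
  romanDom (G.induce {w | w ≠ v})

/-- The Roman bondage number of `G`. -/
noncomputable def romanBondage {V : Type*} [Fintype V] [DecidableEq V]
    (G : SimpleGraph V) : ℕ :=
  sInf {k | ∃ B : Finset (Sym2 V), ↑B ⊆ G.edgeSet ∧ B.card = k ∧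
    romanDom (G.deleteEdges ↑B) ≠ romanDom G}

lemma isRDF_mono {V : Type*} {G H : SimpleGraph V} (h : H ≤ G) {f : V → ℕ}
    (hf : IsRDF H f) : IsRDF G f :=
  ⟨hf.1, fun v hv => by
    obtain ⟨u, hu, hu2⟩ := hf.2 v hv
    exact ⟨u, h hu, hu2⟩⟩

lemma romanDom_le {V : Type*} [Fintype V] (G : SimpleGraph V) {f : V → ℕ}
    (hf : IsRDF G f) : romanDom G ≤ ∑ v, f v :=
  Nat.sInf_le ⟨f, hf, rfl⟩

lemma romanDom_spec {V : Type*} [Fintype V] (G : SimpleGraph V) :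
    ∃ f, IsRDF G f ∧ ∑ v, f v = romanDom G := by
  have hne : {w | ∃ f, IsRDF G f ∧ ∑ v, f v = w}.Nonempty :=
    ⟨_, (fun _ => 2), ⟨fun v => le_rfl, fun v h => by simp at h⟩, rfl⟩
  exact Nat.sInf_mem hne

lemma romanDom_mono {V : Type*} [Fintype V] {G H : SimpleGraph V} (h : H ≤ G) :
    romanDom G ≤ romanDom H := by
  obtain ⟨f, hf, hs⟩ := romanDom_spec H
  calc romanDom G ≤ ∑ v, f v := romanDom_le G (isRDF_mono h hf)
  _ = romanDom H := hs

lemma sum_update_aux {V : Type*} [Fintype V] [DecidableEq V] (f : V → ℕ) (x : V) (c : ℕ) :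
    ∑ v, Function.update f x c v + f x = ∑ v, f v + c := by
  rw [Finset.sum_update_of_mem (Finset.mem_univ x),
      Finset.sum_eq_sum_sdiff_singleton_add (Finset.mem_univ x) f]
  omega

/-- If `x, y, z` is a path of length `2` in `G`, then
`b_R(G) ≤ d(x) + d(y) + d(z) − 3 − |N(x) ∩ N(y)|`. -/
theorem stmt4 {V : Type*} [Fintype V] [DecidableEq V] (G : SimpleGraph V)
    [DecidableRel G.Adj] (x y z : V) (hxy : G.Adj x y) (hyz : G.Adj y z)
    (hxz : x ≠ z) :
    romanBondage G ≤
      G.degree x + G.degree y + G.degree z - 3 -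
        (G.neighborFinset x ∩ G.neighborFinset y).card := by
  classical
  have hxny : x ≠ y := hxy.ne
  have hynz : y ≠ z := hyz.ne
  set Bx : Finset (Sym2 V) := ((G.neighborFinset x).erase y).image (fun u => s(x,u)) with hBxdef
  set Bz : Finset (Sym2 V) := ((G.neighborFinset z).erase y).image (fun u => s(z,u)) with hBzdef
  set Sy : Finset V := ((G.neighborFinset y \ G.neighborFinset x).erase x).erase z with hSydef
  set By : Finset (Sym2 V) := Sy.image (fun u => s(y,u)) with hBydef
  set B : Finset (Sym2 V) := Bx ∪ Bz ∪ By with hBdef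
  have hSy : ∀ u ∈ Sy, u ≠ x ∧ u ≠ z ∧ G.Adj y u ∧ ¬ G.Adj x u := by
    intro u hu
    simp only [hSydef, Finset.mem_erase, Finset.mem_sdiff,
      SimpleGraph.mem_neighborFinset] at hu
    tauto
  -- membership facts
  have hmem1 : ∀ u, G.Adj x u → u ≠ y → s(x,u) ∈ B := by
    intro u hu hne
    exact Finset.mem_union_left _ (Finset.mem_union_left _
      (Finset.mem_image.2 ⟨u, Finset.mem_erase.2 ⟨hne, (SimpleGraph.mem_neighborFinset ..).2 hu⟩, rfl⟩))
  have hmem2 : ∀ u, G.Adj z u → u ≠ y → s(z,u) ∈ B := by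
    intro u hu hne
    exact Finset.mem_union_left _ (Finset.mem_union_right _
      (Finset.mem_image.2 ⟨u, Finset.mem_erase.2 ⟨hne, (SimpleGraph.mem_neighborFinset ..).2 hu⟩, rfl⟩))
  have hmem3 : ∀ u, G.Adj y u → u ≠ x → u ≠ z → ¬ G.Adj x u → s(y,u) ∈ B := by
    intro u hu hnx hnz hnadj
    refine Finset.mem_union_right _ (Finset.mem_image.2 ⟨u, ?_, rfl⟩)
    simp only [hSydef, Finset.mem_erase, Finset.mem_sdiff, SimpleGraph.mem_neighborFinset]
    exact ⟨hnz, hnx, hu, hnadj⟩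
  have hnotmem : ∀ a b : V, s(a,b) ∈ B →
      (a = x ∧ b ≠ y) ∨ (b = x ∧ a ≠ y) ∨ (a = z ∧ b ≠ y) ∨ (b = z ∧ a ≠ y)
      ∨ (a = y ∧ b ∈ Sy) ∨ (b = y ∧ a ∈ Sy) := by
    intro a b h
    simp only [hBdef, hBxdef, hBzdef, hBydef, Finset.mem_union, Finset.mem_image] at h
    rcases h with (⟨u, hu, he⟩ | ⟨u, hu, he⟩) | ⟨u, hu, he⟩
    · obtain ⟨hu1, _⟩ := Finset.mem_erase.1 hu
      rcases Sym2.eq_iff.1 he with ⟨h1, h2⟩ | ⟨h1, h2⟩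
      · exact Or.inl ⟨h1.symm, h2 ▸ hu1⟩
      · exact Or.inr (Or.inl ⟨h1.symm, h2 ▸ hu1⟩)
    · obtain ⟨hu1, _⟩ := Finset.mem_erase.1 hu
      rcases Sym2.eq_iff.1 he with ⟨h1, h2⟩ | ⟨h1, h2⟩
      · exact Or.inr (Or.inr (Or.inl ⟨h1.symm, h2 ▸ hu1⟩))
      · exact Or.inr (Or.inr (Or.inr (Or.inl ⟨h1.symm, h2 ▸ hu1⟩)))
    · rcases Sym2.eq_iff.1 he with ⟨h1, h2⟩ | ⟨h1, h2⟩
      · exact Or.inr (Or.inr (Or.inr (Or.inr (Or.inl ⟨h1.symm, h2 ▸ hu⟩))))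
      · exact Or.inr (Or.inr (Or.inr (Or.inr (Or.inr ⟨h1.symm, h2 ▸ hu⟩))))
  have hxyB : s(x,y) ∉ B := by
    intro h
    rcases hnotmem x y h with ⟨_, h2⟩ | ⟨h1, _⟩ | ⟨h1, _⟩ | ⟨h1, _⟩ | ⟨h1, _⟩ | ⟨_, h2⟩
    · exact h2 rfl
    · exact hxny h1.symm
    · exact hxz h1
    · exact hynz h1
    · exact hxny h1
    · exact (hSy x h2).1 rfl
  have hzyB : s(z,y) ∉ B := by
    intro h
    rcases hnotmem z y h with ⟨h1, _⟩ | ⟨h1, _⟩ | ⟨_, h2⟩ | ⟨h1, _⟩ | ⟨h1, _⟩ | ⟨_, h2⟩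
    · exact hxz h1.symm
    · exact hxny h1.symm
    · exact h2 rfl
    · exact hynz h1
    · exact hynz h1.symm
    · exact (hSy z h2).2.1 rfl
  have hBsub : ↑B ⊆ G.edgeSet := by
    intro e he
    rw [Finset.mem_coe] at he
    simp only [hBdef, hBxdef, hBzdef, hBydef, Finset.mem_union, Finset.mem_image] at he
    rcases he with (⟨u, hu, he⟩ | ⟨u, hu, he⟩) | ⟨u, hu, he⟩
    · rw [← he]; exact (SimpleGraph.mem_neighborFinset ..).1 (Finset.mem_of_mem_erase hu)
    · rw [← he]; exact (SimpleGraph.mem_neighborFinset ..).1 (Finset.mem_of_mem_erase hu)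
    · rw [← he]; exact (hSy u hu).2.2.1
  -- the graphs
  set H : SimpleGraph V := G.deleteEdges ↑B with hHdef
  set B' : Finset (Sym2 V) := insert s(x,y) B with hB'def
  set H' : SimpleGraph V := G.deleteEdges ↑B' with hH'def
  have hB'sub : ↑B' ⊆ G.edgeSet := by
    intro e he
    rw [Finset.mem_coe, hB'def, Finset.mem_insert] at he
    rcases he with he | he
    · rw [he]; exact hxy
    · exact hBsub he
  have hHleG : H ≤ G := SimpleGraph.deleteEdges_le _
  have hH'leG : H' ≤ G := SimpleGraph.deleteEdges_le _
  have hH'leH : H' ≤ H := by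
    intro a b hab
    rw [hH'def, SimpleGraph.deleteEdges_adj] at hab
    rw [hHdef, SimpleGraph.deleteEdges_adj]
    exact ⟨hab.1, fun hm => hab.2 (by rw [Finset.mem_coe, hB'def]; exact Finset.mem_insert_of_mem hm)⟩
  -- adjacency structure of H and H'
  have hHxy : H.Adj x y := by
    rw [hHdef, SimpleGraph.deleteEdges_adj]; exact ⟨hxy, hxyB⟩
  have hHzy : H.Adj z y := by
    rw [hHdef, SimpleGraph.deleteEdges_adj]; exact ⟨hyz.symm, hzyB⟩
  have hHx : ∀ u, H.Adj x u → u = y := by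
    intro u h
    rw [hHdef, SimpleGraph.deleteEdges_adj] at h
    by_contra hne
    exact h.2 (hmem1 u h.1 hne)
  have hHz : ∀ u, H.Adj z u → u = y := by
    intro u h
    rw [hHdef, SimpleGraph.deleteEdges_adj] at h
    by_contra hne
    exact h.2 (hmem2 u h.1 hne)
  have hHy : ∀ u, H.Adj y u → u = x ∨ u = z ∨ G.Adj x u := by
    intro u h
    rw [hHdef, SimpleGraph.deleteEdges_adj] at h
    by_contra hne
    push_neg at hne
    exact h.2 (hmem3 u h.1 hne.1 hne.2.1 hne.2.2)
  have hH'x : ∀ u, ¬ H'.Adj x u := by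
    intro u h
    rw [hH'def, SimpleGraph.deleteEdges_adj] at h
    refine h.2 ?_
    rw [Finset.mem_coe, hB'def]
    by_cases hu : u = y
    · rw [hu]; exact Finset.mem_insert_self _ _
    · exact Finset.mem_insert_of_mem (hmem1 u h.1 hu)
  have hH'y : ∀ u, H'.Adj y u → u = z ∨ G.Adj x u := by
    intro u h
    have hx : u ≠ x := fun he => hH'x y (he ▸ h.symm)
    rcases hHy u (hH'leH h) with h1 | h1 | h1
    · exact absurd h1 hx
    · exact Or.inl h1
    · exact Or.inr h1
  -- cardinality estimates
  have hdx : G.degree x = (G.neighborFinset x).card := rfl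
  have hdy : G.degree y = (G.neighborFinset y).card := rfl
  have hdz : G.degree z = (G.neighborFinset z).card := rfl
  have hyNx : y ∈ G.neighborFinset x := (SimpleGraph.mem_neighborFinset ..).2 hxy
  have hyNz : y ∈ G.neighborFinset z := (SimpleGraph.mem_neighborFinset ..).2 hyz.symm
  have cBx : Bx.card + 1 ≤ G.degree x := by
    have h1 : Bx.card ≤ ((G.neighborFinset x).erase y).card := Finset.card_image_le
    have h2 : ((G.neighborFinset x).erase y).card = (G.neighborFinset x).card - 1 :=
      Finset.card_erase_of_mem hyNx
    have h3 : 1 ≤ (G.neighborFinset x).card := Finset.card_pos.2 ⟨y, hyNx⟩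
    omega
  have cBz : Bz.card + 1 ≤ G.degree z := by
    have h1 : Bz.card ≤ ((G.neighborFinset z).erase y).card := Finset.card_image_le
    have h2 : ((G.neighborFinset z).erase y).card = (G.neighborFinset z).card - 1 :=
      Finset.card_erase_of_mem hyNz
    have h3 : 1 ≤ (G.neighborFinset z).card := Finset.card_pos.2 ⟨y, hyNz⟩
    omega
  have hinter : (G.neighborFinset x ∩ G.neighborFinset y).card
      = (G.neighborFinset y ∩ G.neighborFinset x).card := by
    rw [Finset.inter_comm]
  have hsd : (G.neighborFinset y \ G.neighborFinset x).card
      + (G.neighborFinset y ∩ G.neighborFinset x).card = G.degree y :=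
    Finset.card_sdiff_add_card_inter _ _
  have hxmem : x ∈ G.neighborFinset y \ G.neighborFinset x := by
    simp only [Finset.mem_sdiff, SimpleGraph.mem_neighborFinset]
    exact ⟨hxy.symm, G.irrefl⟩
  have hcard : B.card + 4 + (G.neighborFinset x ∩ G.neighborFinset y).card
      ≤ G.degree x + G.degree y + G.degree z := by
    have hBy : By.card ≤ Sy.card := Finset.card_image_le
    by_cases hadj : G.Adj x z
    · -- z is a common neighbor of x and y; edge xz counted twice
      have hzSy : z ∉ (G.neighborFinset y \ G.neighborFinset x).erase x := by
        simp only [Finset.mem_erase, Finset.mem_sdiff, SimpleGraph.mem_neighborFinset]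
        tauto
      have hSycard : Sy.card + 1 = (G.neighborFinset y \ G.neighborFinset x).card := by
        rw [hSydef, Finset.erase_eq_of_notMem hzSy, Finset.card_erase_of_mem hxmem]
        have : 1 ≤ (G.neighborFinset y \ G.neighborFinset x).card :=
          Finset.card_pos.2 ⟨x, hxmem⟩
        omega
      have hxzBx : s(x,z) ∈ Bx ∩ Bz := by
        rw [Finset.mem_inter]
        constructor
        · exact Finset.mem_image.2 ⟨z, Finset.mem_erase.2
            ⟨fun h => hynz h.symm, (SimpleGraph.mem_neighborFinset ..).2 hadj⟩, rfl⟩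
        · exact Finset.mem_image.2 ⟨x, Finset.mem_erase.2
            ⟨hxny, (SimpleGraph.mem_neighborFinset ..).2 hadj.symm⟩, Sym2.eq_swap⟩
      have h1 : (Bx ∪ Bz).card + (Bx ∩ Bz).card = Bx.card + Bz.card :=
        Finset.card_union_add_card_inter _ _
      have h2 : 1 ≤ (Bx ∩ Bz).card := Finset.card_pos.2 ⟨_, hxzBx⟩
      have h3 : B.card ≤ (Bx ∪ Bz).card + By.card := Finset.card_union_le _ _
      omega
    · -- x and z both lie in N(y) \ N(x)
      have hzmem : z ∈ (G.neighborFinset y \ G.neighborFinset x).erase x := by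
        simp only [Finset.mem_erase, Finset.mem_sdiff, SimpleGraph.mem_neighborFinset]
        exact ⟨fun h => hxz h.symm, hyz, hadj⟩
      have hSycard : Sy.card + 2 = (G.neighborFinset y \ G.neighborFinset x).card := by
        rw [hSydef, Finset.card_erase_of_mem hzmem, Finset.card_erase_of_mem hxmem]
        have h1 : 1 ≤ (G.neighborFinset y \ G.neighborFinset x).card :=
          Finset.card_pos.2 ⟨x, hxmem⟩
        have h2 : 1 ≤ ((G.neighborFinset y \ G.neighborFinset x).erase x).card :=
          Finset.card_pos.2 ⟨z, hzmem⟩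
        have h3 : ((G.neighborFinset y \ G.neighborFinset x).erase x).card
            = (G.neighborFinset y \ G.neighborFinset x).card - 1 :=
          Finset.card_erase_of_mem hxmem
        omega
      have h3 : B.card ≤ Bx.card + Bz.card + By.card :=
        le_trans (Finset.card_union_le _ _)
          (by have := Finset.card_union_le Bx Bz; omega)
      omega
  have hB'card : B'.card = B.card + 1 := Finset.card_insert_of_notMem hxyB
  -- now the domination argument
  by_cases hH : romanDom H = romanDom G
  · -- show that deleting additionally xy changes the Roman domination number
    have hkey : romanDom H' ≠ romanDom G := by
      intro heq
      obtain ⟨f, hf, hfs⟩ := romanDom_spec H'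
      have hw : ∑ v, f v = romanDom G := by rw [hfs, heq]
      have hfx : 1 ≤ f x := by
        rcases Nat.eq_zero_or_pos (f x) with h0 | h0
        · obtain ⟨u, hu, _⟩ := hf.2 x h0
          exact absurd hu (hH'x u)
        · exact h0
      by_cases hfy : f y = 2
      · -- reduce on G
        set g := Function.update f x 0 with hgdef
        have hg : IsRDF G g := by
          constructor
          · intro v
            by_cases hv : v = x
            · rw [hv, hgdef, Function.update_self]; omega
            · rw [hgdef, Function.update_of_ne hv]; exact hf.1 v
          · intro v hv
            by_cases hv' : v = x
            · refine ⟨y, hv' ▸ hxy, ?_⟩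
              rw [hgdef, Function.update_of_ne (Ne.symm hxny), hfy]
            · rw [hgdef, Function.update_of_ne hv'] at hv
              obtain ⟨u, hu, hu2⟩ := hf.2 v hv
              have hux : u ≠ x := fun he => hH'x v (he ▸ hu).symm
              exact ⟨u, hH'leG hu, by rw [hgdef, Function.update_of_ne hux]; exact hu2⟩
        have h1 : romanDom G ≤ ∑ v, g v := romanDom_le G hg
        have h2 : ∑ v, g v + f x = ∑ v, f v + 0 := sum_update_aux f x 0
        omega
      · -- f y ≤ 1
        have hfy1 : f y ≤ 1 := by have := hf.1 y; omega
        have hfz : 1 ≤ f z := by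
          rcases Nat.eq_zero_or_pos (f z) with h0 | h0
          · obtain ⟨u, hu, hu2⟩ := hf.2 z h0
            have : u = y := hHz u (hH'leH hu)
            rw [this] at hu2; omega
          · exact h0
        set g := Function.update (Function.update (Function.update f x 0) z 0) y 2 with hgdef
        have hgy : g y = 2 := by rw [hgdef, Function.update_self]
        have hgx : g x = 0 := by
          rw [hgdef, Function.update_of_ne hxny, Function.update_of_ne hxz, Function.update_self]
        have hgz : g z = 0 := by
          rw [hgdef, Function.update_of_ne (Ne.symm hynz), Function.update_self]
        have hgother : ∀ v, v ≠ x → v ≠ y → v ≠ z → g v = f v := by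
          intro v h1 h2 h3
          rw [hgdef, Function.update_of_ne h2, Function.update_of_ne h3, Function.update_of_ne h1]
        have hg : IsRDF H g := by
          constructor
          · intro v
            by_cases h1 : v = x; · rw [h1, hgx]; omega
            by_cases h2 : v = y; · rw [h2, hgy]
            by_cases h3 : v = z; · rw [h3, hgz]; omega
            rw [hgother v h1 h2 h3]; exact hf.1 v
          · intro v hv
            have hvy : v ≠ y := by intro h; rw [h, hgy] at hv; omega
            by_cases h1 : v = x
            · exact ⟨y, h1 ▸ hHxy, hgy⟩
            by_cases h3 : v = z
            · exact ⟨y, h3 ▸ hHzy, hgy⟩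
            rw [hgother v h1 hvy h3] at hv
            obtain ⟨u, hu, hu2⟩ := hf.2 v hv
            have hux : u ≠ x := fun he => hH'x v (he ▸ hu).symm
            have huz : u ≠ z := by
              intro he
              exact hvy (hHz v (hH'leH (he ▸ hu)).symm)
            by_cases huy : u = y
            · exact ⟨y, huy ▸ hH'leH hu, hgy⟩
            · exact ⟨u, hH'leH hu, by rw [hgother u hux huy huz]; exact hu2⟩
        have h1 : romanDom H ≤ ∑ v, g v := romanDom_le H hg
        have e1 : ∑ v, Function.update f x 0 v + f x = ∑ v, f v + 0 := sum_update_aux f x 0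
        have e2 : ∑ v, Function.update (Function.update f x 0) z 0 v
            + Function.update f x 0 z = ∑ v, Function.update f x 0 v + 0 :=
          sum_update_aux _ z 0
        have e3 : ∑ v, g v + Function.update (Function.update f x 0) z 0 y
            = ∑ v, Function.update (Function.update f x 0) z 0 v + 2 :=
          sum_update_aux _ y 2
        rw [Function.update_of_ne (Ne.symm hxz)] at e2
        rw [Function.update_of_ne hynz, Function.update_of_ne (Ne.symm hxny)] at e3
        -- ∑ g = ∑ f - f x - f z - f y + 2
        have hfx2 : f x ≤ 2 := hf.1 x
        have hfz2 : f z ≤ 2 := hf.1 z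
        have hHG : romanDom H = romanDom G := hH
        -- from minimality : f x = 1, f z = 1, f y = 0
        have hvals : f x = 1 ∧ f z = 1 ∧ f y = 0 := by omega
        obtain ⟨hfx1, hfz1, hfy0⟩ := hvals
        obtain ⟨u, hu, hu2⟩ := hf.2 y hfy0
        rcases hH'y u hu with h1' | h1'
        · rw [h1', hfz1] at hu2; omega
        · -- u is a common neighbor of x and y with f u = 2
          set h : V → ℕ := Function.update f x 0 with hhdef
          have hh : IsRDF G h := by
            constructor
            · intro v
              by_cases hv : v = x
              · rw [hv, hhdef, Function.update_self]; omega
              · rw [hhdef, Function.update_of_ne hv]; exact hf.1 v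
            · intro v hv
              by_cases hv' : v = x
              · refine ⟨u, hv' ▸ h1', ?_⟩
                have hux : u ≠ x := fun he => by rw [he, hfx1] at hu2; omega
                rw [hhdef, Function.update_of_ne hux]; exact hu2
              · rw [hhdef, Function.update_of_ne hv'] at hv
                obtain ⟨u', hu', hu'2⟩ := hf.2 v hv
                have hux : u' ≠ x := fun he => hH'x v (he ▸ hu').symm
                exact ⟨u', hH'leG hu', by rw [hhdef, Function.update_of_ne hux]; exact hu'2⟩
          have hle : romanDom G ≤ ∑ v, h v := romanDom_le G hh
          have he : ∑ v, h v + f x = ∑ v, f v + 0 := sum_update_aux f x 0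
          omega
    have hmem : B'.card ∈ {k | ∃ Bs : Finset (Sym2 V), ↑Bs ⊆ G.edgeSet ∧ Bs.card = k ∧
        romanDom (G.deleteEdges ↑Bs) ≠ romanDom G} := ⟨B', hB'sub, rfl, hkey⟩
    have := Nat.sInf_le hmem
    rw [romanBondage] at *
    omega
  · have hmem : B.card ∈ {k | ∃ Bs : Finset (Sym2 V), ↑Bs ⊆ G.edgeSet ∧ Bs.card = k ∧
        romanDom (G.deleteEdges ↑Bs) ≠ romanDom G} := ⟨B, hBsub, rfl, hH⟩
    have := Nat.sInf_le hmem
    rw [romanBondage] at *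
    omega
end

section
/- Let G be a graph and v a vertex with γ_R(G − v) ≥ γ_R(G). Let E_v be the set of all edges of G incident to v. Then γ_R(G − E_v) > γ_R(G). -/
lemma romanDom_set_nonempty {V : Type*} [Fintype V] (G : SimpleGraph V) :
    {w | ∃ f, IsRDF G f ∧ ∑ v, f v = w}.Nonempty :=
  ⟨∑ _v : V, 2, fun _ => 2, ⟨fun _ => le_refl 2, fun _ h => by simp at h⟩, rfl⟩

/-- If `γ_R(G − v) ≥ γ_R(G)` then deleting all edges incident to
`v` increases the Roman domination number. -/
theorem stmt6 {V : Type*} [Fintype V] [DecidableEq V] (G : SimpleGraph V)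
    (v : V) (hv : romanDom G ≤ romanDomDel G v) :
    romanDom G < romanDom (G.deleteEdges {e : Sym2 V | v ∈ e}) := by
  obtain ⟨f, hf, hsum⟩ :=
    Nat.sInf_mem (romanDom_set_nonempty (G.deleteEdges {e : Sym2 V | v ∈ e}))
  have hfv : 1 ≤ f v := by
    rcases Nat.eq_zero_or_pos (f v) with h | h
    · obtain ⟨u, hu, _⟩ := hf.2 v h
      rw [SimpleGraph.deleteEdges_adj] at hu
      exact absurd (by simp : v ∈ s(v, u)) hu.2
    · exact h
  have hg : IsRDF (G.induce {w | w ≠ v}) (fun w => f ↑w) := by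
    refine ⟨fun w => hf.1 w, fun w hw => ?_⟩
    obtain ⟨u, hu, hu2⟩ := hf.2 ↑w hw
    rw [SimpleGraph.deleteEdges_adj] at hu
    have huv : u ≠ v := by
      rintro rfl
      exact hu.2 (by simp)
    exact ⟨⟨u, huv⟩, by simpa using hu.1, hu2⟩
  have hdel : romanDomDel G v ≤ ∑ w : {w : V | w ≠ v}, f ↑w :=
    Nat.sInf_le ⟨fun w => f ↑w, hg, rfl⟩
  have hsplit : (∑ w : {w : V | w ≠ v}, f ↑w) + f v = ∑ w, f w := by
    rw [← Finset.sum_subtype (Finset.univ.erase v)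
      (fun x => by simp [Finset.mem_erase]) f]
    exact Finset.sum_erase_add _ _ (Finset.mem_univ v)
  have h2 : romanDom (G.deleteEdges {e : Sym2 V | v ∈ e}) = ∑ w, f w := hsum.symm
  have h3 : (∑ w : {w : V | w ≠ v}, f ↑w) < ∑ w, f w :=
    hsplit ▸ Nat.lt_add_of_pos_right hfv
  exact lt_of_le_of_lt (hv.trans hdel) (h2 ▸ h3)
end

section
/- Let G be a connected graph on at least 2 vertices. If some vertex u of G satisfies γ_R(G − u) ≥ γ_R(G), then the Roman bondage number satisfies b_R(G) ≤ d(u) − γ_R(G − u) + γ_R(G) ≤ Δ(G), where Δ(G) is the maximum degree. -/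
/-!
For every graph `H` and vertex `u`, `γ_R(H - u) < γ_R(H) + d_H(u)`: restrict a minimum Roman
dominating function `f` of `H` to `H - u`, raising the neighbours of `u` to `1` when `f u = 2`;
when `f u = 0`, `u` has a neighbour, so `d_H(u) > 0`.
With `k = γ_R(G - u) - γ_R(G) < d(u)`, delete `d(u) - k` edges at `u` to get `H` with
`d_H(u) = k`. As `H - u ≤ G - u`, `γ_R(G - u) ≤ γ_R(H - u) < γ_R(H) + k`,
i.e. `γ_R(G) < γ_R(H)`.
-/

section

open Finset SimpleGraph

variable {V : Type*}

lemma isRDF_one (G : SimpleGraph V) : IsRDF G fun _ => 1 :=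
  ⟨fun _ => one_le_two, fun _ h => absurd h one_ne_zero⟩

lemma IsRDF.mono {G H : SimpleGraph V} {f : V → ℕ} (hGH : G ≤ H) (hf : IsRDF G f) :
    IsRDF H f :=
  ⟨hf.1, fun v hv => (hf.2 v hv).imp fun _ h => ⟨hGH h.1, h.2⟩⟩

def raiseNeighbors (G : SimpleGraph V) [DecidableRel G.Adj] (f : V → ℕ) (u : V) : V → ℕ :=
  fun v => if f u = 2 ∧ G.Adj u v then max (f v) 1 else f v

lemma IsRDF.induce_ne_raiseNeighbors {G : SimpleGraph V} [DecidableRel G.Adj] {f : V → ℕ}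
    (hf : IsRDF G f) (u : V) :
    IsRDF (G.induce {w | w ≠ u}) fun v => raiseNeighbors G f u v := by
  refine ⟨fun v => ?_, fun v hv => ?_⟩
  · have := hf.1 v
    simp only [raiseNeighbors]
    split_ifs <;> omega
  · have hv' : ¬(f u = 2 ∧ G.Adj u v) ∧ f v = 0 := by
      simp only [raiseNeighbors] at hv
      split_ifs at hv <;> simp_all
    obtain ⟨w, hvw, hw⟩ := hf.2 v hv'.2
    have hwu : w ≠ u := by
      rintro rfl
      exact hv'.1 ⟨hw, hvw.symm⟩
    refine ⟨⟨w, hwu⟩, hvw, ?_⟩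
    have := hf.1 w
    simp only [raiseNeighbors]
    split_ifs <;> omega

section Fintype

variable [Fintype V]

lemma exists_isRDF_sum_eq_romanDom (G : SimpleGraph V) :
    ∃ f, IsRDF G f ∧ ∑ v, f v = romanDom G :=
  Nat.sInf_mem (s := {w | ∃ f, IsRDF G f ∧ ∑ v, f v = w}) ⟨_, _, isRDF_one G, rfl⟩

lemma romanDom_le_sum {G : SimpleGraph V} {f : V → ℕ} (hf : IsRDF G f) :
    romanDom G ≤ ∑ v, f v :=
  Nat.sInf_le ⟨f, hf, rfl⟩

lemma romanDom_anti {G H : SimpleGraph V} (hGH : G ≤ H) : romanDom H ≤ romanDom G := by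
  obtain ⟨f, hf, hsum⟩ := exists_isRDF_sum_eq_romanDom G
  exact hsum ▸ romanDom_le_sum (hf.mono hGH)

lemma sum_raiseNeighbors_le (G : SimpleGraph V) [DecidableRel G.Adj] (f : V → ℕ) (u : V) :
    ∑ v, raiseNeighbors G f u v ≤ ∑ v, f v + if f u = 2 then G.degree u else 0 := by
  by_cases hu : f u = 2
  · have hdeg : ∑ v, (if G.Adj u v then 1 else 0) = G.degree u := by
      rw [sum_boole, ← card_neighborFinset_eq_degree, neighborFinset_eq_filter, Nat.cast_id]
    rw [if_pos hu, ← hdeg, ← sum_add_distrib]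
    refine sum_le_sum fun v _ => ?_
    simp only [raiseNeighbors, hu, true_and]
    split_ifs <;> omega
  · simp [raiseNeighbors, hu]

variable [DecidableEq V]

lemma romanDomDel_anti {G H : SimpleGraph V} (hGH : G ≤ H) (u : V) :
    romanDomDel H u ≤ romanDomDel G u :=
  romanDom_anti fun _ _ h => hGH h

lemma romanBondage_le_card {G : SimpleGraph V} {B : Finset (Sym2 V)} (hB : ↑B ⊆ G.edgeSet)
    (hne : romanDom (G.deleteEdges ↑B) ≠ romanDom G) : romanBondage G ≤ #B :=
  Nat.sInf_le ⟨B, hB, rfl, hne⟩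

variable (G : SimpleGraph V) [DecidableRel G.Adj]

lemma SimpleGraph.degree_deleteEdges_add_card {u : V} {B : Finset (Sym2 V)}
    (hB : B ⊆ G.incidenceFinset u) : (G.deleteEdges ↑B).degree u + #B = G.degree u := by
  have hinc : (G.deleteEdges ↑B).incidenceFinset u = G.incidenceFinset u \ B := by
    ext e
    simp [incidenceSet, edgeSet_deleteEdges, and_right_comm]
  rw [← card_incidenceFinset_eq_degree, ← card_incidenceFinset_eq_degree, hinc,
    card_sdiff_add_card_eq_card hB]

lemma romanDomDel_add_le {f : V → ℕ} (hf : IsRDF G f) (u : V) :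
    romanDomDel G u + f u ≤ ∑ v, f v + if f u = 2 then G.degree u else 0 := by
  have hraise_self : raiseNeighbors G f u u = f u := if_neg fun h => G.irrefl h.2
  calc romanDomDel G u + f u
      ≤ ∑ v : ({w | w ≠ u} : Set V), raiseNeighbors G f u v + raiseNeighbors G f u u := by
        rw [hraise_self]
        exact Nat.add_le_add_right (romanDom_le_sum (hf.induce_ne_raiseNeighbors u)) _
    _ = ∑ v, raiseNeighbors G f u v := by
        rw [Fintype.sum_eq_add_sum_compl u, add_comm, ← sum_subtype]
        simp
    _ ≤ _ := sum_raiseNeighbors_le G f u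

lemma romanDomDel_lt_romanDom_add_degree (u : V) :
    romanDomDel G u < romanDom G + G.degree u := by
  obtain ⟨f, hf, hsum⟩ := exists_isRDF_sum_eq_romanDom G
  have hdel := hsum ▸ romanDomDel_add_le G hf u
  have hfu := hf.1 u
  obtain hu0 | hu1 | hu2 : f u = 0 ∨ f u = 1 ∨ f u = 2 := by omega
  · obtain ⟨w, hw, -⟩ := hf.2 u hu0
    have := (G.degree_pos_iff_exists_adj u).mpr ⟨w, hw⟩
    rw [if_neg (by omega)] at hdel
    omega
  · rw [if_neg (by omega)] at hdel
    omega
  · rw [if_pos hu2] at hdel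
    omega

end Fintype

end

theorem stmt10_general {V : Type*} [Fintype V] [DecidableEq V] (G : SimpleGraph V)
    [DecidableRel G.Adj] (u : V) (hu : romanDom G ≤ romanDomDel G u) :
    romanBondage G ≤ G.degree u + romanDom G - romanDomDel G u ∧
      G.degree u + romanDom G - romanDomDel G u ≤ G.maxDegree := by
  have hlt := romanDomDel_lt_romanDom_add_degree G u
  obtain ⟨B, hBu, hBcard⟩ := Finset.exists_subset_card_eq
    (s := G.incidenceFinset u) (n := G.degree u + romanDom G - romanDomDel G u)
    (by rw [G.card_incidenceFinset_eq_degree]; omega)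
  have hdeg := G.degree_deleteEdges_add_card hBu
  have hltB := romanDomDel_lt_romanDom_add_degree (G.deleteEdges ↑B) u
  have hdelB := romanDomDel_anti (G.deleteEdges_le ↑B) u
  have hB : ↑B ⊆ G.edgeSet := fun e he => G.incidenceSet_subset u (by simpa using hBu he)
  refine ⟨hBcard ▸ romanBondage_le_card hB (by omega), ?_⟩
  have := G.degree_le_maxDegree u
  omega

/-- If `G` is connected of order at least `2` and
`γ_R(G − u) ≥ γ_R(G)` for some vertex `u`, then
`b_R(G) ≤ d(u) − γ_R(G − u) + γ_R(G) ≤ Δ(G)`. -/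
theorem stmt10 {V : Type*} [Fintype V] [DecidableEq V] (G : SimpleGraph V)
    [DecidableRel G.Adj] (hc : G.Connected) (hn : 2 ≤ Fintype.card V)
    (u : V) (hu : romanDom G ≤ romanDomDel G u) :
    romanBondage G ≤ G.degree u + romanDom G - romanDomDel G u ∧
      G.degree u + romanDom G - romanDomDel G u ≤ G.maxDegree :=
  stmt10_general G u hu
end
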